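/- The precedence relation ≪ on rotations is transitive and irreflexive: if ρ'' ≪ ρ' and ρ' ≪ ρ then ρ'' ≪ ρ, and no rotation precedes itself; hence ≪ is a strict partial order and the rotation digraph with transitive edges is acyclic. -/

import Mathlib

/-- A stable-marriage instance with `n` men and `n` women: each man `m` ranks the
women via `mrank m` (lower rank = more preferred), each woman `w` ranks the men
via `wrank w`; rankings are strict, i.e. injective. -/
structure SMInst (n : ℕ) where
  mrank : Fin n → Fin n → ℕ
  wrank : Fin n → Fin n → ℕ
  mrank_inj : ∀ m, Function.Injective (mrank m)
  wrank_inj : ∀ w, Function.Injective (wrank w)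

namespace SMInst

variable {n : ℕ} (I : SMInst n)

/-- A matching is a bijection from men to women; the pair `(m, w)` blocks `M` if `m`
strictly prefers `w` to his partner `M m` and `w` strictly prefers `m` to her partner. -/
def Blocks (M : Fin n ≃ Fin n) (m w : Fin n) : Prop :=
  I.mrank m w < I.mrank m (M m) ∧ I.wrank w m < I.wrank w (M.symm w)

/-- A matching is stable iff it admits no blocking pair. -/
def IsStable (M : Fin n ≃ Fin n) : Prop :=
  ∀ m w, ¬ I.Blocks M m w

/-- `M₁ ⪯ M₂` : every man weakly prefers his partner in `M₁` to his partner in `M₂`. -/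
def Dominates (M₁ M₂ : Fin n ≃ Fin n) : Prop :=
  ∀ m, I.mrank m (M₁ m) ≤ I.mrank m (M₂ m)

/-- The man-optimal stable matching (the output of men-proposing Gale–Shapley):
stable and dominating every stable matching. -/
def IsManOptimal (M₀ : Fin n ≃ Fin n) : Prop :=
  I.IsStable M₀ ∧ ∀ M, I.IsStable M → I.Dominates M₀ M

/-- The woman-optimal (man-pessimal) stable matching. -/
def IsWomanOptimal (Mz : Fin n ≃ Fin n) : Prop :=
  I.IsStable Mz ∧ ∀ M, I.IsStable M → I.Dominates M Mz

/-- `d(M, M')` : the number of men with different partners in `M` and `M'`. -/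
def mdist (M M' : Fin n ≃ Fin n) : ℕ :=
  let _ := I
  (Finset.univ.filter fun m => M m ≠ M' m).card

/-- `L` is a rotation exposed in `M`: a cyclic list of at least two pairs `(mᵢ, wᵢ)` of `M`
with distinct men, such that `w_{i+1}` is the first woman strictly below `wᵢ` on `mᵢ`'s
list who prefers `mᵢ` to her `M`-partner. -/
def ExposedIn (M : Fin n ≃ Fin n) (L : List (Fin n × Fin n)) : Prop :=
  2 ≤ L.length ∧ (L.map Prod.fst).Nodup ∧ (∀ p ∈ L, M p.1 = p.2) ∧
  ∀ i : Fin L.length,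
    I.mrank (L.get i).1 (L.get i).2 <
      I.mrank (L.get i).1 (L.get ⟨(i.1 + 1) % L.length, Nat.mod_lt _ i.pos⟩).2 ∧
    I.wrank (L.get ⟨(i.1 + 1) % L.length, Nat.mod_lt _ i.pos⟩).2 (L.get i).1 <
      I.wrank (L.get ⟨(i.1 + 1) % L.length, Nat.mod_lt _ i.pos⟩).2
        (L.get ⟨(i.1 + 1) % L.length, Nat.mod_lt _ i.pos⟩).1 ∧
    ∀ w, I.mrank (L.get i).1 (L.get i).2 < I.mrank (L.get i).1 w →
      I.mrank (L.get i).1 w <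
        I.mrank (L.get i).1 (L.get ⟨(i.1 + 1) % L.length, Nat.mod_lt _ i.pos⟩).2 →
      ¬ I.wrank w (L.get i).1 < I.wrank w (M.symm w)

/-- `M'` is obtained from `M` by eliminating the rotation `L` exposed in `M`:
each man `mᵢ` of `L` moves to `w_{i+1}`, all other men keep their partners. -/
def Elim (M M' : Fin n ≃ Fin n) (L : List (Fin n × Fin n)) : Prop :=
  I.ExposedIn M L ∧
  (∀ i : Fin L.length,
    M' (L.get i).1 = (L.get ⟨(i.1 + 1) % L.length, Nat.mod_lt _ i.pos⟩).2) ∧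
  ∀ m : Fin n, m ∉ L.map Prod.fst → M' m = M m

/-- `ElimSeq M Ls M'` : applying the rotations of `Ls` in order starting from `M` yields `M'`. -/
def ElimSeq : (Fin n ≃ Fin n) → List (List (Fin n × Fin n)) → (Fin n ≃ Fin n) → Prop
  | M, [], M' => M' = M
  | M, L :: Ls, M' => ∃ Mmid, I.Elim M Mmid L ∧ ElimSeq Mmid Ls M'

/-- A rotation of the instance: a cyclic list exposed in some stable matching. -/
def IsRotation (L : List (Fin n × Fin n)) : Prop :=
  ∃ M, I.IsStable M ∧ I.ExposedIn M L

/-- `ρ' ≪ ρ` : `ρ'` is eliminated in every sequence of rotation eliminations starting at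
the man-optimal matching `M₀` and ending at a stable matching in which `ρ` is exposed.
(Rotations are identified up to their sets of pairs.) -/
def Precedes (L' L : List (Fin n × Fin n)) : Prop :=
  ∀ M₀ Ls M, I.IsManOptimal M₀ → I.ElimSeq M₀ Ls M → I.IsStable M → I.ExposedIn M L →
    ∃ K ∈ Ls, K.toFinset = L'.toFinset

/-- The rotation `L` produces the pair `(m, w)` : eliminating `L` matches `m` to `w`. -/
def Produces (L : List (Fin n × Fin n)) (m w : Fin n) : Prop :=
  let _ := I
  ∃ i : Fin L.length,
    (L.get i).1 = m ∧ (L.get ⟨(i.1 + 1) % L.length, Nat.mod_lt _ i.pos⟩).2 = w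

/-- The set of rotations of the instance, identified with their sets of pairs. -/
def RotSet : Set (Finset (Fin n × Fin n)) :=
  {R | ∃ L, I.IsRotation L ∧ L.toFinset = R}

/-- Precedence of rotations, on rotations-as-sets-of-pairs. -/
def PrecedesR (R' R : Finset (Fin n × Fin n)) : Prop :=
  ∃ L' L, I.IsRotation L' ∧ I.IsRotation L ∧ L'.toFinset = R' ∧ L.toFinset = R ∧
    I.Precedes L' L

/-- Closed subsets (down-sets) of the rotation poset. -/
def IsClosedF (S : Finset (Finset (Fin n × Fin n))) : Prop :=
  (∀ R ∈ S, R ∈ I.RotSet) ∧ ∀ R ∈ S, ∀ R' ∈ I.RotSet, I.PrecedesR R' R → R' ∈ S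

/-- `X(T)` : the set of men involved in at least one rotation of `T`. -/
def menOf (T : Finset (Finset (Fin n × Fin n))) : Finset (Fin n) :=
  let _ := I
  T.biUnion fun R => R.image Prod.fst

/-- The stable matching corresponding to the closed subset `S`: obtained from `M₀` by
eliminating the rotations of `S`, each exactly once, in some valid order. -/
def Corresponds (M₀ : Fin n ≃ Fin n) (S : Finset (Finset (Fin n × Fin n)))
    (M : Fin n ≃ Fin n) : Prop :=
  ∃ Ls : List (List (Fin n × Fin n)),
    (Ls.map List.toFinset).Nodup ∧ (Ls.map List.toFinset).toFinset = S ∧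
    I.ElimSeq M₀ Ls M

end SMInst

namespace SMInst

variable {n : ℕ} {I : SMInst n}

private lemma mem_fst_iff {L : List (Fin n × Fin n)} {m : Fin n} :
    m ∈ L.map Prod.fst ↔ ∃ i : Fin L.length, (L.get i).1 = m := by
  constructor
  · intro h
    obtain ⟨p, hp, rfl⟩ := List.mem_map.mp h
    obtain ⟨i, rfl⟩ := List.mem_iff_get.mp hp
    exact ⟨i, rfl⟩
  · rintro ⟨i, rfl⟩
    exact List.mem_map.mpr ⟨L.get i, List.get_mem L _, rfl⟩

private lemma elim_le {M M' : Fin n ≃ Fin n} {L : List (Fin n × Fin n)}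
    (h : I.Elim M M' L) (m : Fin n) : I.mrank m (M m) ≤ I.mrank m (M' m) := by
  obtain ⟨hexp, hrot, hoff⟩ := h
  by_cases hm : m ∈ L.map Prod.fst
  · obtain ⟨i, rfl⟩ := mem_fst_iff.mp hm
    rw [hrot i, hexp.2.2.1 _ (List.get_mem L _)]
    exact le_of_lt (hexp.2.2.2 i).1
  · rw [hoff m hm]

private lemma elim_lt {M M' : Fin n ≃ Fin n} {L : List (Fin n × Fin n)}
    (h : I.Elim M M' L) {p : Fin n × Fin n} (hp : p ∈ L) :
    I.mrank p.1 p.2 < I.mrank p.1 (M' p.1) := by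
  obtain ⟨hexp, hrot, hoff⟩ := h
  obtain ⟨i, rfl⟩ := List.mem_iff_get.mp hp
  rw [hrot i]
  exact (hexp.2.2.2 i).1

private lemma elim_w_le {M M' : Fin n ≃ Fin n} {L : List (Fin n × Fin n)}
    (h : I.Elim M M' L) (w : Fin n) :
    I.wrank w (M'.symm w) ≤ I.wrank w (M.symm w) := by
  obtain ⟨hexp, hrot, hoff⟩ := h
  by_cases hm : M.symm w ∈ L.map Prod.fst
  · obtain ⟨i, hi⟩ := mem_fst_iff.mp hm
    have hw : (L.get i).2 = w := by
      rw [← hexp.2.2.1 _ (List.get_mem L _), hi, M.apply_symm_apply]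
    have hlpos : 0 < L.length := i.pos
    set j : Fin L.length := ⟨(i.1 + (L.length - 1)) % L.length, Nat.mod_lt _ hlpos⟩ with hj
    have hfin : (⟨(j.1 + 1) % L.length, Nat.mod_lt _ j.pos⟩ : Fin L.length) = i := by
      apply Fin.ext
      show ((i.1 + (L.length - 1)) % L.length + 1) % L.length = i.1
      rw [Nat.mod_add_mod, show i.1 + (L.length - 1) + 1 = i.1 + L.length by omega,
        Nat.add_mod_right, Nat.mod_eq_of_lt i.isLt]
    have hM' : M' (L.get j).1 = w := by
      rw [hrot j, hfin, hw]
    have hsymm : M'.symm w = (L.get j).1 := (M'.symm_apply_eq).mpr hM'.symm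
    have hcond := (hexp.2.2.2 j).2.1
    rw [hfin, hw] at hcond
    rw [hsymm, ← hi]
    exact le_of_lt hcond
  · have h1 : M' (M.symm w) = w := by rw [hoff _ hm, M.apply_symm_apply]
    rw [(M'.symm_apply_eq).mpr h1.symm]

private lemma elim_stable {M M' : Fin n ≃ Fin n} {L : List (Fin n × Fin n)}
    (hM : I.IsStable M) (h : I.Elim M M' L) : I.IsStable M' := by
  intro m w hb
  obtain ⟨hb1, hb2⟩ := hb
  have hw : I.wrank w m < I.wrank w (M.symm w) := lt_of_lt_of_le hb2 (elim_w_le h w)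
  obtain ⟨hexp, hrot, hoff⟩ := h
  by_cases hm : m ∈ L.map Prod.fst
  · obtain ⟨i, rfl⟩ := mem_fst_iff.mp hm
    have hMm : M (L.get i).1 = (L.get i).2 := hexp.2.2.1 _ (List.get_mem L _)
    rcases lt_trichotomy (I.mrank (L.get i).1 w) (I.mrank (L.get i).1 (M (L.get i).1)) with
      hlt | heq | hgt
    · exact hM _ w ⟨hlt, hw⟩
    · have hww : w = M (L.get i).1 := I.mrank_inj _ heq
      rw [hww, Equiv.symm_apply_apply] at hw
      exact lt_irrefl _ hw
    · rw [hMm] at hgt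
      rw [hrot i] at hb1
      exact (hexp.2.2.2 i).2.2 w hgt hb1 hw
  · rw [hoff _ hm] at hb1
    exact hM _ w ⟨hb1, hw⟩

private lemma elimseq_le {Ls : List (List (Fin n × Fin n))} :
    ∀ {M M' : Fin n ≃ Fin n}, I.ElimSeq M Ls M' →
      ∀ m, I.mrank m (M m) ≤ I.mrank m (M' m) := by
  induction Ls with
  | nil => intro M M' h m; rw [show M' = M from h]
  | cons K Ls ih =>
    intro M M' h m
    obtain ⟨Mmid, h1, h2⟩ := h
    exact le_trans (elim_le h1 m) (ih h2 m)

private lemma elimseq_stable {Ls : List (List (Fin n × Fin n))} :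
    ∀ {M M' : Fin n ≃ Fin n}, I.IsStable M → I.ElimSeq M Ls M' → I.IsStable M' := by
  induction Ls with
  | nil => intro M M' hs h; rw [show M' = M from h]; exact hs
  | cons K Ls ih =>
    intro M M' hs h
    obtain ⟨Mmid, h1, h2⟩ := h
    exact ih (elim_stable hs h1) h2

/-- A rotation eliminated along a sequence cannot be exposed at the end. -/
private lemma elimseq_ne {T : List (Fin n × Fin n)} {Ls : List (List (Fin n × Fin n))} :
    ∀ {M Mend : Fin n ≃ Fin n}, I.ElimSeq M Ls Mend → I.ExposedIn Mend T →
      ∀ K ∈ Ls, K.toFinset ≠ T.toFinset := by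
  induction Ls with
  | nil => simp
  | cons K0 Ls ih =>
    intro M Mend h hT K hK
    obtain ⟨Mmid, h1, h2⟩ := h
    rcases List.mem_cons.mp hK with rfl | hK
    · intro hfs
      have hpos : 0 < K.length := lt_of_lt_of_le two_pos h1.1.1
      set p := K.get ⟨0, hpos⟩ with hp
      have hpK : p ∈ K := List.get_mem K _
      have hpT : p ∈ T := by
        rw [← List.mem_toFinset, ← hfs, List.mem_toFinset]; exact hpK
      have h3 : Mend p.1 = p.2 := hT.2.2.1 p hpT
      have h4 : I.mrank p.1 p.2 < I.mrank p.1 (Mmid p.1) := elim_lt h1 hpK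
      have h5 : I.mrank p.1 (Mmid p.1) ≤ I.mrank p.1 (Mend p.1) := elimseq_le h2 p.1
      rw [h3] at h5
      omega
    · exact ih h2 hT K hK

private lemma elimseq_extract {Ls : List (List (Fin n × Fin n))} :
    ∀ {M₀ M : Fin n ≃ Fin n}, I.IsStable M₀ → I.ElimSeq M₀ Ls M →
      ∀ K ∈ Ls, ∃ A Mk, (∀ x ∈ A, x ∈ Ls) ∧ I.ElimSeq M₀ A Mk ∧
        I.IsStable Mk ∧ I.ExposedIn Mk K := by
  induction Ls with
  | nil => simp
  | cons K0 Ls ih =>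
    intro M₀ M hs h K hK
    obtain ⟨Mmid, h1, h2⟩ := h
    rcases List.mem_cons.mp hK with rfl | hK
    · exact ⟨[], M₀, by simp, rfl, hs, h1.1⟩
    · obtain ⟨A, Mk, hsub, hseq, hst, hexp⟩ := ih (elim_stable hs h1) h2 K hK
      refine ⟨K0 :: A, Mk, ?_, ⟨Mmid, h1, hseq⟩, hst, hexp⟩
      intro x hx
      rcases List.mem_cons.mp hx with rfl | hx
      · exact List.mem_cons_self
      · exact List.mem_cons_of_mem _ (hsub x hx)

/-- Exposure transfer: two lists with the same set of pairs, each exposed somewhere,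
are exposed in the same matchings. -/
private lemma exposed_congr {M M₁ : Fin n ≃ Fin n} {K L : List (Fin n × Fin n)}
    (hK : I.ExposedIn M K) (hL : I.ExposedIn M₁ L) (hfs : K.toFinset = L.toFinset) :
    I.ExposedIn M L := by
  obtain ⟨hKlen, hKnd, hKpairs, hKcond⟩ := hK
  obtain ⟨hLlen, hLnd, hLpairs, hLcond⟩ := hL
  have hmem : ∀ p : Fin n × Fin n, p ∈ L ↔ p ∈ K := fun p => by
    rw [← List.mem_toFinset, ← hfs, List.mem_toFinset]
  refine ⟨hLlen, hLnd, fun p hp => hKpairs p ((hmem p).mp hp), ?_⟩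
  intro i
  have hcondL := hLcond i
  set p := L.get i with hpdef
  set q := L.get ⟨(i.1 + 1) % L.length, Nat.mod_lt _ i.pos⟩ with hqdef
  have hpL : p ∈ L := List.get_mem L _
  have hqL : q ∈ L := List.get_mem L _
  obtain ⟨j, hj⟩ := List.mem_iff_get.mp ((hmem p).mp hpL)
  have hcondK := hKcond j
  rw [hj] at hcondK
  set r := K.get ⟨(j.1 + 1) % K.length, Nat.mod_lt _ j.pos⟩ with hrdef
  have hrK : r ∈ K := List.get_mem K _
  have hq2 : q.2 = r.2 := by
    rcases lt_trichotomy (I.mrank p.1 q.2) (I.mrank p.1 r.2) with hlt | heq | hgt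
    · exfalso
      apply hcondK.2.2 q.2 hcondL.1 hlt
      have hq1 : M q.1 = q.2 := hKpairs q ((hmem q).mp hqL)
      rw [show M.symm q.2 = q.1 from (M.symm_apply_eq).mpr hq1.symm]
      exact hcondL.2.1
    · exact I.mrank_inj p.1 heq
    · exfalso
      apply hcondL.2.2 r.2 hcondK.1 hgt
      have hr1 : M₁ r.1 = r.2 := hLpairs r ((hmem r).mpr hrK)
      rw [show M₁.symm r.2 = r.1 from (M₁.symm_apply_eq).mpr hr1.symm]
      exact hcondK.2.1
  have hq : q = r := by
    have h1 : M q.1 = q.2 := hKpairs q ((hmem q).mp hqL)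
    have h2 : M r.1 = r.2 := hKpairs r hrK
    exact Prod.ext (M.injective (by rw [h1, h2, hq2])) hq2
  rw [hq]
  exact hcondK

private lemma women_le {M M' : Fin n ≃ Fin n} (hM : I.IsStable M) (hM' : I.IsStable M')
    (hdom : I.Dominates M M') (w : Fin n) :
    I.wrank w (M'.symm w) ≤ I.wrank w (M.symm w) := by
  by_contra hlt
  push_neg at hlt
  set m0 := M.symm w with hm0
  have h1 : M m0 = w := M.apply_symm_apply w
  have hne : M' m0 ≠ w := by
    intro h
    rw [(M'.symm_apply_eq).mpr h.symm] at hlt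
    exact lt_irrefl _ hlt
  have h2 : I.mrank m0 (M m0) < I.mrank m0 (M' m0) :=
    lt_of_le_of_ne (hdom m0) (fun h => hne (by rw [← I.mrank_inj m0 h, h1]))
  rw [h1] at h2
  exact hM' m0 w ⟨h2, hlt⟩

private lemma meet_exists {M M' : Fin n ≃ Fin n} (hM : I.IsStable M) (hM' : I.IsStable M') :
    ∃ μ : Fin n ≃ Fin n, I.IsStable μ ∧ I.Dominates μ M ∧ I.Dominates μ M' := by
  classical
  set g : Fin n → Fin n := fun m =>
    if I.mrank m (M m) ≤ I.mrank m (M' m) then M m else M' m with hg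
  have hgM : ∀ m, g m = M m ∨ g m = M' m := fun m => by
    by_cases h : I.mrank m (M m) ≤ I.mrank m (M' m) <;> simp [hg, h]
  have hgle : ∀ m, I.mrank m (g m) ≤ I.mrank m (M m) ∧ I.mrank m (g m) ≤ I.mrank m (M' m) := by
    intro m
    by_cases h : I.mrank m (M m) ≤ I.mrank m (M' m) <;> simp [hg, h] <;> omega
  have aux : ∀ m1 m2 w, M m1 = w → M' m2 = w → g m1 = w → g m2 = w → m1 ≠ m2 → False := by
    intro m1 m2 w e1 e2 e3 e4 hne
    have hMm2 : M m2 ≠ w := fun h => hne (M.injective (e1.trans h.symm))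
    have hM'm1 : M' m1 ≠ w := fun h => hne (M'.injective (h.trans e2.symm))
    have h2 : I.mrank m2 w < I.mrank m2 (M m2) := by
      by_cases hc : I.mrank m2 (M m2) ≤ I.mrank m2 (M' m2)
      · exact absurd (by rw [← e4]; simp [hg, hc]) (Ne.symm hMm2)
      · push_neg at hc
        rw [show w = M' m2 from by rw [← e4]; simp [hg, not_le.mpr hc]]
        exact hc
    have h3 : I.mrank m1 w < I.mrank m1 (M' m1) := by
      by_cases hc : I.mrank m1 (M m1) ≤ I.mrank m1 (M' m1)
      · have hw : M m1 = w := e1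
        rw [← hw]
        exact lt_of_le_of_ne hc (fun h => hM'm1 ((I.mrank_inj m1 h).symm.trans hw))
      · exact absurd (by rw [← e3]; simp [hg, hc]) hM'm1
    rcases lt_trichotomy (I.wrank w m1) (I.wrank w m2) with hw | hw | hw
    · exact hM' m1 w ⟨h3, by rw [(M'.symm_apply_eq).mpr e2.symm]; exact hw⟩
    · exact hne (I.wrank_inj w hw)
    · exact hM m2 w ⟨h2, by rw [(M.symm_apply_eq).mpr e1.symm]; exact hw⟩
  have hinj : Function.Injective g := by
    intro m1 m2 he
    by_contra hne
    rcases hgM m1 with h1 | h1 <;> rcases hgM m2 with h2 | h2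
    · exact hne (M.injective (h1.symm.trans (he.trans h2)))
    · exact aux m1 m2 (g m1) h1.symm (h2.symm.trans he.symm) rfl he.symm hne
    · exact aux m2 m1 (g m1) (h2.symm.trans he.symm) h1.symm he.symm rfl (Ne.symm hne)
    · exact hne (M'.injective (h1.symm.trans (he.trans h2)))
  let μ : Fin n ≃ Fin n := Equiv.ofBijective g (Finite.injective_iff_bijective.mp hinj)
  have hμ : ∀ m, μ m = g m := fun m => rfl
  refine ⟨μ, ?_, fun m => by rw [hμ]; exact (hgle m).1, fun m => by rw [hμ]; exact (hgle m).2⟩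
  intro m w hb
  obtain ⟨hb1, hb2⟩ := hb
  have hgm0 : g (μ.symm w) = w := μ.apply_symm_apply w
  rw [hμ] at hb1
  by_cases hc : I.mrank (μ.symm w) (M (μ.symm w)) ≤ I.mrank (μ.symm w) (M' (μ.symm w))
  · have hMw : M (μ.symm w) = w := by
      have hh : g (μ.symm w) = M (μ.symm w) := by simp [hg, hc]
      rw [← hh]; exact hgm0
    exact hM m w ⟨lt_of_lt_of_le hb1 (hgle m).1, by
      rw [(M.symm_apply_eq).mpr hMw.symm]; exact hb2⟩
  · have hMw : M' (μ.symm w) = w := by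
      have hh : g (μ.symm w) = M' (μ.symm w) := by simp [hg, hc]
      rw [← hh]; exact hgm0
    exact hM' m w ⟨lt_of_lt_of_le hb1 (hgle m).2, by
      rw [(M'.symm_apply_eq).mpr hMw.symm]; exact hb2⟩

private lemma list_optimal : ∀ (ls : List (Fin n ≃ Fin n)), (∀ M ∈ ls, I.IsStable M) →
    ls ≠ [] → ∃ M₀, I.IsStable M₀ ∧ ∀ M ∈ ls, I.Dominates M₀ M
  | [], _, h => absurd rfl h
  | [M], hs, _ => ⟨M, hs M (by simp), by
      intro M' hM'
      simp only [List.mem_singleton] at hM'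
      subst hM'
      intro m
      exact le_refl _⟩
  | M :: M2 :: ls, hs, _ => by
    obtain ⟨M₀, h1, h2⟩ := list_optimal (M2 :: ls)
      (fun x hx => hs x (List.mem_cons_of_mem _ hx)) (by simp)
    obtain ⟨μ, hμs, hd1, hd2⟩ := meet_exists (hs M (List.mem_cons_self)) h1
    refine ⟨μ, hμs, ?_⟩
    intro M' hM'
    rcases List.mem_cons.mp hM' with rfl | hM'
    · exact hd1
    · intro m
      exact le_trans (hd2 m) (h2 M' hM' m)

private lemma exists_manOptimal (hex : ∃ M, I.IsStable M) : ∃ M₀, I.IsManOptimal M₀ := by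
  classical
  obtain ⟨M, hM⟩ := hex
  set ls := (Finset.univ.filter fun M : Fin n ≃ Fin n => I.IsStable M).toList with hls
  have hmem : ∀ M' : Fin n ≃ Fin n, I.IsStable M' → M' ∈ ls := by
    intro M' h
    rw [hls, Finset.mem_toList]
    simp [h]
  have hstab : ∀ M' ∈ ls, I.IsStable M' := by
    intro M' h
    rw [hls, Finset.mem_toList, Finset.mem_filter] at h
    exact h.2
  obtain ⟨M₀, h1, h2⟩ := list_optimal ls hstab
    (by intro h; have := hmem M hM; rw [h] at this; simp at this)
  exact ⟨M₀, h1, fun M' hM' => h2 M' (hmem M' hM')⟩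

private lemma exists_step {M M' : Fin n ≃ Fin n} (hM : I.IsStable M) (hM' : I.IsStable M')
    (hdom : I.Dominates M M') (hne : M ≠ M') :
    ∃ L M2, I.Elim M M2 L ∧ I.IsStable M2 ∧ I.Dominates M2 M' ∧
      (∀ m, I.mrank m (M m) ≤ I.mrank m (M2 m)) ∧
      (∃ m, I.mrank m (M m) < I.mrank m (M2 m)) := by
  classical
  set c : Fin n → Fin n → Prop := fun m w =>
    I.mrank m (M m) < I.mrank m w ∧ I.wrank w m < I.wrank w (M.symm w) with hc
  have hMc : ∀ m, M m ≠ M' m → c m (M' m) := by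
    intro m hm
    constructor
    · exact lt_of_le_of_ne (hdom m) fun h => hm (I.mrank_inj m h)
    · have h1 := women_le hM hM' hdom (M' m)
      rw [M'.symm_apply_apply] at h1
      refine lt_of_le_of_ne h1 fun h => hm ?_
      have h2 : M (M.symm (M' m)) = M' m := M.apply_symm_apply _
      rw [← I.wrank_inj (M' m) h] at h2
      exact h2
  have hex : ∀ m, ∃ w, M m ≠ M' m →
      (c m w ∧ (∀ w', c m w' → I.mrank m w ≤ I.mrank m w') ∧
        I.mrank m w ≤ I.mrank m (M' m)) := by
    intro m
    by_cases hm : M m ≠ M' m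
    · obtain ⟨w, hw1, hw2⟩ := Finset.exists_min_image
        (Finset.univ.filter fun w => c m w) (I.mrank m)
        ⟨M' m, Finset.mem_filter.mpr ⟨Finset.mem_univ _, hMc m hm⟩⟩
      exact ⟨w, fun _ => ⟨(Finset.mem_filter.mp hw1).2,
        fun w' hw' => hw2 w' (Finset.mem_filter.mpr ⟨Finset.mem_univ _, hw'⟩),
        hw2 (M' m) (Finset.mem_filter.mpr ⟨Finset.mem_univ _, hMc m hm⟩)⟩⟩
    · exact ⟨M m, fun h => absurd h hm⟩
  choose nw hnw using hex
  set f : Fin n → Fin n := fun m => M.symm (nw m) with hf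
  have hMf : ∀ m, M (f m) = nw m := fun m => M.apply_symm_apply _
  have hfne : ∀ m, M m ≠ M' m → f m ≠ m := by
    intro m hm h
    have h1 := (hnw m hm).1.1
    rw [← hMf m, h] at h1
    exact lt_irrefl _ h1
  have hDf : ∀ m, M m ≠ M' m → M (f m) ≠ M' (f m) := by
    intro m hm heq
    obtain ⟨hcand, hmin, hle⟩ := hnw m hm
    have h3 : M' (f m) = nw m := by rw [← heq]; exact hMf m
    apply hM' m (nw m)
    constructor
    · refine lt_of_le_of_ne hle fun hr => ?_
      exact hfne m hm (M'.injective (h3.trans (I.mrank_inj m hr)))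
    · rw [(M'.symm_apply_eq).mpr h3.symm]
      exact hcand.2
  have hD0 : ∃ m, M m ≠ M' m := by
    by_contra h
    push_neg at h
    exact hne (Equiv.ext h)
  obtain ⟨m0, hm0⟩ := hD0
  have hiter : ∀ t, M (f^[t] m0) ≠ M' (f^[t] m0) := by
    intro t
    induction t with
    | zero => exact hm0
    | succ t ih => rw [Function.iterate_succ_apply']; exact hDf _ ih
  obtain ⟨i, j, hij, heqij⟩ : ∃ i j : ℕ, i < j ∧ f^[i] m0 = f^[j] m0 := by
    obtain ⟨a, b, hab, h⟩ := Fintype.exists_ne_map_eq_of_card_lt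
      (fun a : Fin (n + 1) => f^[a.1] m0) (by simp)
    rcases lt_trichotomy a.1 b.1 with h1 | h1 | h1
    · exact ⟨a.1, b.1, h1, h⟩
    · exact absurd (Fin.ext h1) hab
    · exact ⟨b.1, a.1, h1, h.symm⟩
  set x := f^[i] m0 with hx
  have hxiter : ∀ t, M (f^[t] x) ≠ M' (f^[t] x) := by
    intro t
    rw [hx, ← Function.iterate_add_apply]
    exact hiter (t + i)
  have hxD : M x ≠ M' x := by simpa using hxiter 0
  have hxfix : f^[j - i] x = x := by
    rw [hx, ← Function.iterate_add_apply, show j - i + i = j by omega]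
    exact heqij.symm
  have hQ : ∃ k, 0 < k ∧ f^[k] x = x := ⟨j - i, by omega, hxfix⟩
  set k := Nat.find hQ with hk
  obtain ⟨hkpos, hkfix⟩ : 0 < k ∧ f^[k] x = x := Nat.find_spec hQ
  have hkmin : ∀ t, 0 < t → t < k → f^[t] x ≠ x := by
    intro t h1 h2 h3
    exact Nat.find_min hQ h2 ⟨h1, h3⟩
  have hk2 : 2 ≤ k := by
    rcases Nat.lt_or_ge k 2 with h | h
    · exfalso
      have hk1 : k = 1 := by omega
      rw [hk1] at hkfix
      simp at hkfix
      exact hfne x hxD hkfix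
    · exact h
  have hsucc : ∀ t, t < k → f^[(t + 1) % k] x = f (f^[t] x) := by
    intro t ht
    rcases Nat.lt_or_ge (t + 1) k with h | h
    · rw [Nat.mod_eq_of_lt h, Function.iterate_succ_apply']
    · have ht1 : t + 1 = k := by omega
      have h2 : f (f^[t] x) = x := by
        rw [← Function.iterate_succ_apply' f t x, show Nat.succ t = k from ht1]
        exact hkfix
      rw [ht1, Nat.mod_self, h2]
      simp
  set mlist : List (Fin n) := (List.range k).map (fun t => f^[t] x) with hml
  have hmlen : mlist.length = k := by simp [hml]
  have hmget : ∀ (t : ℕ) (ht : t < mlist.length), mlist.get ⟨t, ht⟩ = f^[t] x := by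
    intro t ht
    simp [hml]
  have hinjOn : ∀ a ∈ List.range k, ∀ b ∈ List.range k, f^[a] x = f^[b] x → a = b := by
    intro a ha b hb hab
    simp only [List.mem_range] at ha hb
    by_contra hne2
    rcases lt_trichotomy a b with h | h | h
    · refine hkmin (k - b + a) (by omega) (by omega) ?_
      rw [Function.iterate_add_apply, hab, ← Function.iterate_add_apply,
        show k - b + b = k by omega]
      exact hkfix
    · exact hne2 h
    · refine hkmin (k - a + b) (by omega) (by omega) ?_
      rw [Function.iterate_add_apply, ← hab, ← Function.iterate_add_apply,
        show k - a + a = k by omega]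
      exact hkfix
  have hnd : mlist.Nodup := List.Nodup.map_on hinjOn (List.nodup_range)
  have hmD : ∀ m ∈ mlist, M m ≠ M' m := by
    intro m hm
    rw [hml] at hm
    obtain ⟨t, _, rfl⟩ := List.mem_map.mp hm
    exact hxiter t
  set L : List (Fin n × Fin n) := mlist.map (fun m => (m, M m)) with hL
  have hLlen : L.length = k := by simp [hL, hmlen]
  have hget' : ∀ (idx : Fin L.length), L.get idx = (f^[idx.1] x, M (f^[idx.1] x)) := by
    rintro ⟨t, ht⟩
    have ht' : t < mlist.length := by rw [hmlen, ← hLlen]; exact ht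
    have h1 : L.get ⟨t, ht⟩ = (mlist.get ⟨t, ht'⟩, M (mlist.get ⟨t, ht'⟩)) := by
      simp [hL, List.getElem_map]
    rw [h1, hmget t ht']
  have hLfst : L.map Prod.fst = mlist := by
    rw [hL, List.map_map]
    exact List.map_id mlist
  have hform : ∀ t, t < k → mlist.formPerm (f^[t] x) = f (f^[t] x) := by
    intro t ht
    have ht' : t < mlist.length := by rw [hmlen]; exact ht
    conv_lhs => rw [show f^[t] x = mlist.get ⟨t, ht'⟩ from (hmget t ht').symm]
    rw [List.get_eq_getElem, List.formPerm_apply_getElem mlist hnd]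
    have hg2 := hmget ((t + 1) % mlist.length) (Nat.mod_lt _ (by omega))
    rw [List.get_eq_getElem] at hg2
    rw [hg2, hmlen, hsucc t ht]
  have hexp : I.ExposedIn M L := by
    refine ⟨by rw [hLlen]; exact hk2, by rw [hLfst]; exact hnd, ?_, ?_⟩
    · intro p hp
      rw [hL] at hp
      obtain ⟨m, _, rfl⟩ := List.mem_map.mp hp
      rfl
    · rintro ⟨t, ht⟩
      rw [hget' ⟨t, ht⟩, hget' ⟨(t + 1) % L.length, Nat.mod_lt _ (Fin.pos ⟨t, ht⟩)⟩]
      dsimp only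
      have htk : t < k := by rw [← hLlen]; exact ht
      rw [hLlen, hsucc t htk, hMf]
      obtain ⟨hcand, hmin, hle⟩ := hnw (f^[t] x) (hxiter t)
      refine ⟨hcand.1, hcand.2, ?_⟩
      intro w h1 h2 h3
      exact absurd (hmin w ⟨h1, h3⟩) (by omega)
  set M2 : Fin n ≃ Fin n := mlist.formPerm.trans M with hM2
  have hM2val : ∀ m, M2 m = M (mlist.formPerm m) := fun m => rfl
  have hM2off : ∀ m ∉ mlist, M2 m = M m := by
    intro m hm
    rw [hM2val, List.formPerm_apply_of_notMem hm]
  have hM2men : ∀ t, t < k → M2 (f^[t] x) = nw (f^[t] x) := by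
    intro t ht
    rw [hM2val, hform t ht, hMf]
  have helim : I.Elim M M2 L := by
    refine ⟨hexp, ?_, ?_⟩
    · rintro ⟨t, ht⟩
      rw [hget' ⟨t, ht⟩, hget' ⟨(t + 1) % L.length, Nat.mod_lt _ (Fin.pos ⟨t, ht⟩)⟩]
      dsimp only
      have htk : t < k := by rw [← hLlen]; exact ht
      rw [hLlen, hsucc t htk, hM2val, hform t htk]
    · intro m hm
      rw [hLfst] at hm
      exact hM2off m hm
  have hdom2 : I.Dominates M2 M' := by
    intro m
    by_cases hm : m ∈ mlist
    · rw [hml] at hm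
      obtain ⟨t, htr, rfl⟩ := List.mem_map.mp hm
      rw [List.mem_range] at htr
      rw [hM2men t htr]
      exact (hnw _ (hxiter t)).2.2
    · rw [hM2off m hm]
      exact hdom m
  have hxmem0 : M2 x = nw x := by
    have := hM2men 0 (by omega)
    simpa using this
  refine ⟨L, M2, helim, elim_stable hM helim, hdom2, elim_le helim, x, ?_⟩
  rw [hxmem0]
  exact (hnw x hxD).1.1

private lemma elimseq_reach : ∀ (N : ℕ) {M M' : Fin n ≃ Fin n}, I.IsStable M → I.IsStable M' →
    I.Dominates M M' → (∑ m, I.mrank m (M' m)) - (∑ m, I.mrank m (M m)) ≤ N →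
    ∃ Ls, I.ElimSeq M Ls M' := by
  intro N
  induction N with
  | zero =>
    intro M M' hM hM' hdom hN
    have hle : ∀ m ∈ Finset.univ, I.mrank m (M m) ≤ I.mrank m (M' m) := fun m _ => hdom m
    have h1 := Finset.sum_le_sum hle
    have hsum : (∑ m, I.mrank m (M m)) = ∑ m, I.mrank m (M' m) := by omega
    have heq := (Finset.sum_eq_sum_iff_of_le hle).mp hsum
    have hMeq : M = M' := Equiv.ext fun m => I.mrank_inj m (heq m (Finset.mem_univ m))
    exact ⟨[], hMeq.symm⟩
  | succ N ih =>
    intro M M' hM hM' hdom hN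
    by_cases he : M = M'
    · exact ⟨[], he.symm⟩
    · obtain ⟨L, M2, helim, hst2, hdom2, hwk, m1, hstrict⟩ := exists_step hM hM' hdom he
      have h1 : (∑ m, I.mrank m (M m)) < ∑ m, I.mrank m (M2 m) :=
        Finset.sum_lt_sum (fun m _ => hwk m) ⟨m1, Finset.mem_univ m1, hstrict⟩
      have h2 : (∑ m, I.mrank m (M2 m)) ≤ ∑ m, I.mrank m (M' m) :=
        Finset.sum_le_sum fun m _ => hdom2 m
      obtain ⟨Ls, hLs⟩ := ih hst2 hM' hdom2 (by omega)
      exact ⟨L :: Ls, M2, helim, hLs⟩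

private lemma prec_trans {L'' L' L : List (Fin n × Fin n)} (h' : I.IsRotation L')
    (hP1 : I.Precedes L'' L') (hP2 : I.Precedes L' L) : I.Precedes L'' L := by
  intro M₀ Ls M hopt hseq hstab hexp
  obtain ⟨K', hK'mem, hK'fs⟩ := hP2 M₀ Ls M hopt hseq hstab hexp
  obtain ⟨A, Mk, hsub, hseqA, hstabMk, hexpK'⟩ := elimseq_extract hopt.1 hseq K' hK'mem
  obtain ⟨M₁, hM₁s, hM₁e⟩ := h'
  have hexpL' : I.ExposedIn Mk L' := exposed_congr hexpK' hM₁e hK'fs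
  obtain ⟨K'', hmem, hfs⟩ := hP1 M₀ A Mk hopt hseqA hstabMk hexpL'
  exact ⟨K'', hsub _ hmem, hfs⟩

private lemma prec_irrefl {L : List (Fin n × Fin n)} (hrot : I.IsRotation L) :
    ¬ I.Precedes L L := by
  intro hP
  obtain ⟨M₁, hM₁s, hM₁e⟩ := hrot
  obtain ⟨M₀, hopt⟩ := exists_manOptimal ⟨M₁, hM₁s⟩
  obtain ⟨Ls, hseq⟩ := elimseq_reach (I := I) _ hopt.1 hM₁s (hopt.2 M₁ hM₁s) le_rfl
  obtain ⟨K, hK, hfs⟩ := hP M₀ Ls M₁ hopt hseq hM₁s hM₁e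
  exact elimseq_ne hseq hM₁e K hK hfs

end SMInst
/-- the precedence relation on rotations is transitive, irreflexive and
asymmetric (hence a strict partial order, and the rotation digraph is acyclic). -/
theorem precedes_strict_partial_order {n : ℕ} (I : SMInst n) :
    (∀ L'' L' L : List (Fin n × Fin n),
      I.IsRotation L'' → I.IsRotation L' → I.IsRotation L →
      I.Precedes L'' L' → I.Precedes L' L → I.Precedes L'' L) ∧
    (∀ L : List (Fin n × Fin n), I.IsRotation L → ¬ I.Precedes L L) ∧
    (∀ L L' : List (Fin n × Fin n), I.IsRotation L → I.IsRotation L' →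
      I.Precedes L L' → ¬ I.Precedes L' L) :=
  ⟨fun _ L' _ _ h' _ h1 h2 => SMInst.prec_trans h' h1 h2,
    fun _ h => SMInst.prec_irrefl h,
    fun L L' hL hL' h1 h2 => SMInst.prec_irrefl hL (SMInst.prec_trans hL' h1 h2)⟩
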